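/- Let E_min < E_max, η_c, η_d ∈ (0,1], p_c^{max}, p_d^{max} ≥ 0, V ≥ 0 and price/degradation constants satisfying V·((1/η_c)c_g^{b,max} - η_d·c_g^{b,min} + c_b(η_d + 1/η_c)) ≤ E_max - E_min - η_c·p_c^{max} - p_d^{max}/η_d. If E(t) satisfies p_d^{max}/η_d + E_min ≤ E(t) ≤ V·((1/η_c)c_g^{b,max} - η_d·c_g^{b,min} + c_b(η_d + 1/η_c)) + p_d^{max}/η_d + E_min, and E(t+1) = E(t) - (1/η_d)p^d + η_c·p^c for some 0 ≤ p^d ≤ p_d^{max}, 0 ≤ p^c ≤ p_c^{max}, then E_min ≤ E(t+1) ≤ E_max. -/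

import Mathlib

open Set

theorem sub_add_mem_Icc_of_mem_Icc {α : Type*} [AddCommGroup α] [LinearOrder α]
    [IsOrderedAddMonoid α] {lo hi E d dmax c cmax : α}
    (hE : E ∈ Icc (lo + dmax) (hi - cmax)) (hd : d ∈ Icc 0 dmax) (hc : c ∈ Icc 0 cmax) :
    E - d + c ∈ Icc lo hi := by
  constructor
  · calc lo ≤ E - dmax := le_sub_iff_add_le.mpr hE.1
      _ ≤ E - d := sub_le_sub_left hd.2 E
      _ ≤ E - d + c := le_add_of_nonneg_right hc.1
  · calc E - d + c ≤ E + cmax := add_le_add (sub_le_self E hd.1) hc.2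
      _ ≤ hi := le_sub_iff_add_le.mp hE.2

theorem stmt_8_general (Emin Emax ηc ηd pcmax pdmax V cgmax cgmin cb Et Et1 pd pc : ℝ)
    (hηc : 0 < ηc) (hηd : 0 < ηd)
    (hVmax : V * ((1/ηc) * cgmax - ηd * cgmin + cb * (ηd + 1/ηc))
      ≤ Emax - Emin - ηc * pcmax - pdmax / ηd)
    (hlo : pdmax / ηd + Emin ≤ Et)
    (hhi : Et ≤ V * ((1/ηc) * cgmax - ηd * cgmin + cb * (ηd + 1/ηc))
      + pdmax / ηd + Emin)
    (hpd0 : 0 ≤ pd) (hpdM : pd ≤ pdmax) (hpc0 : 0 ≤ pc) (hpcM : pc ≤ pcmax)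
    (hdyn : Et1 = Et - (1/ηd) * pd + ηc * pc) :
    Emin ≤ Et1 ∧ Et1 ≤ Emax := by
  -- `hVmax` turns the upper bound on `Et` into headroom `ηc * pcmax` below `Emax`.
  have hlevel : Et ∈ Icc (Emin + pdmax / ηd) (Emax - ηc * pcmax) :=
    ⟨by linarith, by linarith⟩
  have hdischarge : (1/ηd) * pd ∈ Icc 0 (pdmax / ηd) := by
    rw [one_div_mul_eq_div]
    exact ⟨by positivity, by gcongr⟩
  have hcharge : ηc * pc ∈ Icc 0 (ηc * pcmax) := ⟨by positivity, by gcongr⟩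
  rw [hdyn]
  exact sub_add_mem_Icc_of_mem_Icc hlevel hdischarge hcharge

theorem stmt_8 (Emin Emax ηc ηd pcmax pdmax V cgmax cgmin cb Et Et1 pd pc : ℝ)
    (hE : Emin < Emax)
    (hηc : 0 < ηc) (hηc1 : ηc ≤ 1) (hηd : 0 < ηd) (hηd1 : ηd ≤ 1)
    (hpc : 0 ≤ pcmax) (hpd : 0 ≤ pdmax) (hV : 0 ≤ V)
    (hVmax : V * ((1/ηc) * cgmax - ηd * cgmin + cb * (ηd + 1/ηc))
      ≤ Emax - Emin - ηc * pcmax - pdmax / ηd)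
    (hlo : pdmax / ηd + Emin ≤ Et)
    (hhi : Et ≤ V * ((1/ηc) * cgmax - ηd * cgmin + cb * (ηd + 1/ηc))
      + pdmax / ηd + Emin)
    (hpd0 : 0 ≤ pd) (hpdM : pd ≤ pdmax) (hpc0 : 0 ≤ pc) (hpcM : pc ≤ pcmax)
    (hdyn : Et1 = Et - (1/ηd) * pd + ηc * pc) :
    Emin ≤ Et1 ∧ Et1 ≤ Emax :=
  stmt_8_general Emin Emax ηc ηd pcmax pdmax V cgmax cgmin cb Et Et1 pd pc hηc hηd hVmax hlo hhi
    hpd0 hpdM hpc0 hpcM hdyn
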